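/- arXiv:2210.09939 — 10 statements merged into one kernel-verified Lean document; each statement's English description precedes it below -/
import Mathlib

section
/- Let f, g : S → ℂ satisfy f(xy) + μ(y)f(σ(y)x) = 2f(x)g(y) for all x, y ∈ S, and for a ∈ S define f_a(x) := f(ax) − f(a)g(x). If there exists a ∈ S with f_a ≠ 0, then g is abelian and f_a is abelian for every a ∈ S; in particular g and each f_a are central. -/
/-!
Every `f_a` satisfies the sine addition law `f_a (x * y) = f_a x * g y + f_a y * g x`. For a
nonzero solution `h` of the sine addition law, expanding `h (x * y * z)` in two ways gives
`h x * φ (y, z) = h z * φ (x, y)` with `φ (x, y) = g (x * y) - g x * g y`; hence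
`φ (x, y) * h z₀ ^ 2 = φ (z₀, z₀) * h x * h y` for any `z₀` with `h z₀ ≠ 0`. The right-hand side is
symmetric in `x, y` and depends on `y * z` only through `h (y * z) = h (z * y)`, so `g` is abelian,
and then so is `h`.
-/

section

variable {S R : Type*} [Semigroup S] [CommRing R]

def IsCentral (h : S → R) : Prop :=
  ∀ x y : S, h (x * y) = h (y * x)

def IsAbelian (h : S → R) : Prop :=
  IsCentral h ∧ ∀ x y z : S, h (x * (y * z)) = h (x * (z * y))

namespace SineAddition

variable {h g : S → R} (hs : ∀ x y : S, h (x * y) = h x * g y + h y * g x)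
include hs

theorem isCentral : IsCentral h := fun x y => by
  rw [hs, hs, add_comm]

theorem mul_sub_mul_eq (x y z : S) :
    h x * (g (y * z) - g y * g z) = h z * (g (x * y) - g x * g y) := by
  have hxyz := hs (x * y) z
  rw [mul_assoc] at hxyz
  linear_combination hxyz - hs x (y * z) + g z * hs x y - g x * hs y z

theorem sub_mul_mul_self_eq (x y z₀ : S) :
    (g (x * y) - g x * g y) * (h z₀ * h z₀) = (g (z₀ * z₀) - g z₀ * g z₀) * (h x * h y) := by
  linear_combination -h z₀ * mul_sub_mul_eq hs x y z₀ - h x * mul_sub_mul_eq hs y z₀ z₀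

theorem isAbelian_of_isCentral (hg : IsCentral g) : IsAbelian h := by
  refine ⟨isCentral hs, fun x y z => ?_⟩
  linear_combination hs x (y * z) - hs x (z * y) + h x * hg y z + g x * isCentral hs y z

variable [NoZeroDivisors R]

theorem isAbelian_of_ne_zero (hne : h ≠ 0) : IsAbelian g := by
  obtain ⟨z₀, hz₀⟩ := Function.ne_iff.mp hne
  have hz₀' : h z₀ * h z₀ ≠ 0 := mul_self_ne_zero.mpr hz₀
  have hsq := sub_mul_mul_self_eq hs (z₀ := z₀)
  have hcomm : IsCentral g := fun x y => by
    refine sub_eq_zero.mp ((mul_eq_zero.mp ?_).resolve_right hz₀')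
    linear_combination hsq x y - hsq y x
  refine ⟨hcomm, fun x y z => sub_eq_zero.mp ((mul_eq_zero.mp ?_).resolve_right hz₀')⟩
  linear_combination hsq x (y * z) - hsq x (z * y)
    + (g (z₀ * z₀) - g z₀ * g z₀) * h x * isCentral hs y z + g x * (h z₀ * h z₀) * hcomm y z

end SineAddition

theorem sine_addition_of_wilson [NeZero (2 : R)] [NoZeroDivisors R] {σ : S → S}
    (hσ : ∀ x y : S, σ (x * y) = σ x * σ y) {μ : S → R} (hμ : ∀ x y : S, μ (x * y) = μ x * μ y)
    {f g : S → R} (hfg : ∀ x y : S, f (x * y) + μ y * f (σ y * x) = 2 * f x * g y) (a x y : S) :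
    f (a * (x * y)) - f a * g (x * y) =
      (f (a * x) - f a * g x) * g y + (f (a * y) - f a * g y) * g x := by
  have E1 := hfg (a * x) y
  have E2 := hfg a (x * y)
  have E3 := hfg (σ y * a) x
  have E4 := hfg a y
  simp only [hσ, hμ, mul_assoc] at E1 E2 E3 E4 ⊢
  refine sub_eq_zero.mp ((mul_eq_zero.mp ?_).resolve_left (two_ne_zero (α := R)))
  linear_combination E1 + E2 - μ y * E3 - 2 * g x * E4

end

theorem stmt_1_general {S : Type*} [Semigroup S] (σ : S → S)
    (hσ : ∀ x y : S, σ (x * y) = σ x * σ y)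
    (μ : S → ℂ) (hμ : ∀ x y : S, μ (x * y) = μ x * μ y)
    (f g : S → ℂ)
    (hfg : ∀ x y : S, f (x * y) + μ y * f (σ y * x) = 2 * f x * g y)
    (hne : ∃ a : S, (fun x => f (a * x) - f a * g x) ≠ 0) :
    ((∀ x y : S, g (x * y) = g (y * x)) ∧
      (∀ x y z : S, g (x * (y * z)) = g (x * (z * y)))) ∧
    (∀ a : S,
      (∀ x y : S, (f (a * (x * y)) - f a * g (x * y)) =
        (f (a * (y * x)) - f a * g (y * x))) ∧
      (∀ x y z : S, (f (a * (x * (y * z))) - f a * g (x * (y * z))) =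
        (f (a * (x * (z * y))) - f a * g (x * (z * y))))) := by
  have hsine := sine_addition_of_wilson hσ hμ hfg
  obtain ⟨a₀, ha₀⟩ := hne
  have hg : IsAbelian g := SineAddition.isAbelian_of_ne_zero (hsine a₀) ha₀
  exact ⟨hg, fun a =>
    SineAddition.isAbelian_of_isCentral (h := fun x => f (a * x) - f a * g x) (hsine a) hg.1⟩

/-- If (f, g) solves the μ-σ-Wilson equation and f_a ≠ 0 for some a,
then g is abelian and every f_a is abelian (in particular central). -/
theorem stmt_1 {S : Type*} [Semigroup S] (σ : S → S) (hσbij : Function.Bijective σ)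
    (hσ : ∀ x y : S, σ (x * y) = σ x * σ y)
    (μ : S → ℂ) (hμ : ∀ x y : S, μ (x * y) = μ x * μ y)
    (hμσ : ∀ x : S, μ (x * σ x) = 1)
    (f g : S → ℂ)
    (hfg : ∀ x y : S, f (x * y) + μ y * f (σ y * x) = 2 * f x * g y)
    (hne : ∃ a : S, (fun x => f (a * x) - f a * g x) ≠ 0) :
    ((∀ x y : S, g (x * y) = g (y * x)) ∧
      (∀ x y z : S, g (x * (y * z)) = g (x * (z * y)))) ∧
    (∀ a : S,
      (∀ x y : S, (f (a * (x * y)) - f a * g (x * y)) =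
        (f (a * (y * x)) - f a * g (y * x))) ∧
      (∀ x y z : S, (f (a * (x * (y * z))) - f a * g (x * (y * z))) =
        (f (a * (x * (z * y))) - f a * g (x * (z * y))))) :=
  stmt_1_general σ hσ μ hμ f g hfg hne
end

section
/- Let f, g : S → ℂ satisfy f(xy) + μ(y)f(σ(y)x) = 2f(x)g(y) for all x, y ∈ S. Then f°(xy) = f(x)g(y) − f*(y)g(x) for all x, y ∈ S. -/
theorem stmt_2_general {S : Type*} [Semigroup S] (σ : S → S)
    (hσ : ∀ x y : S, σ (x * y) = σ x * σ y)
    (μ : S → ℂ) (hμ : ∀ x y : S, μ (x * y) = μ x * μ y)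
    (f g : S → ℂ)
    (hfg : ∀ x y : S, f (x * y) + μ y * f (σ y * x) = 2 * f x * g y) :
    ∀ x y : S,
      (f (x * y) - μ (x * y) * f (σ (x * y))) / 2 =
        f x * g y - (μ y * f (σ y)) * g x := by
  intro x y
  rw [hμ x y, hσ x y]
  -- The term μ y * f (σ y * x) of the equation at (x, y) is cancelled by the equation at (σ y, x).
  linear_combination (hfg x y - μ y * hfg (σ y) x) / 2

/-- f°(xy) = f(x)g(y) − f*(y)g(x), where f*(x) = μ(x)f(σ(x)) and
f° = (f − f*)/2. -/
theorem stmt_2 {S : Type*} [Semigroup S] (σ : S → S) (hσbij : Function.Bijective σ)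
    (hσ : ∀ x y : S, σ (x * y) = σ x * σ y)
    (μ : S → ℂ) (hμ : ∀ x y : S, μ (x * y) = μ x * μ y)
    (hμσ : ∀ x : S, μ (x * σ x) = 1)
    (f g : S → ℂ)
    (hfg : ∀ x y : S, f (x * y) + μ y * f (σ y * x) = 2 * f x * g y) :
    ∀ x y : S,
      (f (x * y) - μ (x * y) * f (σ (x * y))) / 2 =
        f x * g y - (μ y * f (σ y)) * g x :=
  stmt_2_general σ hσ μ hμ f g hfg
end

section
/- Let f, g : S → ℂ satisfy f(xy) + μ(y)f(σ(y)x) = 2f(x)g(y) for all x, y ∈ S. Then f(xy) = 2f(x)g(y) + 2f(y)g(x) − 4f^e(y)g(x) + f*(xy) for all x, y ∈ S. -/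
theorem stmt_3_general {S : Type*} [Semigroup S] (σ : S → S)
    (hσ : ∀ x y : S, σ (x * y) = σ x * σ y)
    (μ : S → ℂ) (hμ : ∀ x y : S, μ (x * y) = μ x * μ y)
    (f g : S → ℂ)
    (hfg : ∀ x y : S, f (x * y) + μ y * f (σ y * x) = 2 * f x * g y) :
    ∀ x y : S,
      f (x * y) =
        2 * f x * g y + 2 * f y * g x -
          4 * ((f y + μ y * f (σ y)) / 2) * g x +
          μ (x * y) * f (σ (x * y)) := by
  intro x y
  rw [hσ, hμ]
  linear_combination hfg x y - μ y * hfg (σ y) x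

/-- f(xy) = 2f(x)g(y) + 2f(y)g(x) − 4f^e(y)g(x) + f*(xy), where
f*(x) = μ(x)f(σ(x)) and f^e = (f + f*)/2. -/
theorem stmt_3 {S : Type*} [Semigroup S] (σ : S → S) (hσbij : Function.Bijective σ)
    (hσ : ∀ x y : S, σ (x * y) = σ x * σ y)
    (μ : S → ℂ) (hμ : ∀ x y : S, μ (x * y) = μ x * μ y)
    (hμσ : ∀ x : S, μ (x * σ x) = 1)
    (f g : S → ℂ)
    (hfg : ∀ x y : S, f (x * y) + μ y * f (σ y * x) = 2 * f x * g y) :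
    ∀ x y : S,
      f (x * y) =
        2 * f x * g y + 2 * f y * g x -
          4 * ((f y + μ y * f (σ y)) / 2) * g x +
          μ (x * y) * f (σ (x * y)) :=
  stmt_3_general σ hσ μ hμ f g hfg
end

section
/- Let f, g : S → ℂ satisfy f(xy) + μ(y)f(σ(y)x) = 2f(x)g(y) for all x, y ∈ S. If f is central and g ≠ 0, then there exists a constant c ∈ ℂ such that f^e = c·g; in particular f^e and g are linearly dependent. -/
/-!
Writing the functional equation at `(x, y)`, `(y, x)`, `(σ x, y)` and `(σ y, x)`, the terms
`μ x f(σ x y)` and `μ y f(σ y x)` cancel in the alternating sum, and centrality removes what is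
left (`f(xy) - f(yx)` and `f(σ y σ x) - f(σ x σ y)`). Hence `f^e(y) g(x) = f^e(x) g(y)`, and
evaluating at a point `y₀` with `g y₀ ≠ 0` gives `f^e = (f^e(y₀) / g(y₀)) g`.
-/

theorem exists_eq_const_mul_of_mul_comm {α K : Type*} [Field K] {F g : α → K} (hg : g ≠ 0)
    (hFg : ∀ x y, F y * g x = F x * g y) : ∃ c : K, ∀ x, F x = c * g x := by
  obtain ⟨y₀, hy₀⟩ : ∃ y₀, g y₀ ≠ 0 := Function.ne_iff.mp hg
  refine ⟨F y₀ / g y₀, fun x => ?_⟩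
  rw [div_mul_eq_mul_div, eq_div_iff hy₀, hFg]

theorem twisted_even_part_mul_comm {S : Type*} [Mul S] {σ : S → S} {μ f g : S → ℂ}
    (hfg : ∀ x y : S, f (x * y) + μ y * f (σ y * x) = 2 * f x * g y)
    (hcentral : ∀ x y : S, f (x * y) = f (y * x)) (x y : S) :
    (f y + μ y * f (σ y)) * g x = (f x + μ x * f (σ x)) * g y := by
  linear_combination (μ x * hfg (σ x) y - hfg y x - μ y * hfg (σ y) x + hfg x y) / 2
    + hcentral y x / 2 - μ x * μ y / 2 * hcentral (σ y) (σ x)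

theorem stmt_4_general {S : Type*} [Semigroup S] (σ : S → S)
    (μ : S → ℂ)
    (f g : S → ℂ)
    (hfg : ∀ x y : S, f (x * y) + μ y * f (σ y * x) = 2 * f x * g y)
    (hcentral : ∀ x y : S, f (x * y) = f (y * x))
    (hg : g ≠ 0) :
    ∃ c : ℂ, ∀ x : S, (f x + μ x * f (σ x)) / 2 = c * g x := by
  obtain ⟨c, hc⟩ := exists_eq_const_mul_of_mul_comm hg (twisted_even_part_mul_comm hfg hcentral)
  exact ⟨c / 2, fun x => by rw [hc x]; ring⟩

/-- If f is central and g ≠ 0, then f^e = c·g for some constant c. -/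
theorem stmt_4 {S : Type*} [Semigroup S] (σ : S → S) (hσbij : Function.Bijective σ)
    (hσ : ∀ x y : S, σ (x * y) = σ x * σ y)
    (μ : S → ℂ) (hμ : ∀ x y : S, μ (x * y) = μ x * μ y)
    (hμσ : ∀ x : S, μ (x * σ x) = 1)
    (f g : S → ℂ)
    (hfg : ∀ x y : S, f (x * y) + μ y * f (σ y * x) = 2 * f x * g y)
    (hcentral : ∀ x y : S, f (x * y) = f (y * x))
    (hg : g ≠ 0) :
    ∃ c : ℂ, ∀ x : S, (f x + μ x * f (σ x)) / 2 = c * g x :=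
  stmt_4_general σ μ f g hfg hcentral hg
end

section
/- Let f, g : S → ℂ satisfy f(xy) + μ(y)f(σ(y)x) = 2f(x)g(y) for all x, y ∈ S. If f^e and g are linearly independent (as elements of the ℂ-vector space of functions S → ℂ) and g ≠ 0, then there exist functions h₁, h₂ : S → ℂ such that g(xy) = f(x)h₁(y) + g(x)h₂(y) for all x, y ∈ S. -/
/-!
Write `f*` for `twist σ μ f`. Subtracting the functional equation at `(σ x, z)`, multiplied by
`μ x`, from the one at `(z, x)` gives `(f - f*)(z x) = 2 f(z) g(x) - 2 g(z) f*(x)`. Expanding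
`(f - f*)(z x y)` in the two ways allowed by associativity yields, for all `z, x, y`,
`f(z x) g(y) - g(z x) f*(y) = f(z) g(x y) - g(z) f*(x y)`.
If `f*` and `g` are linearly independent, two choices of `y` give a system with nonzero
determinant that expresses `g(z x)` through `f(z)` and `g(z)`. Otherwise `f* = l g`, and
`φ = f - l g` is nonzero (as `f^e` and `g` are independent) and satisfies `φ(z x) = 2 φ(z) g(x)`,
which forces `g(x y) = 2 g(x) g(y)`.
-/

section

variable {S K : Type*} [Field K]

def twist (σ : S → S) (μ f : S → K) : S → K := fun x => μ x * f (σ x)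

theorem exists_mul_sub_mul_ne_zero {u v : S → K} (hv : v ≠ 0) (huv : ∀ l : K, u ≠ l • v) :
    ∃ a b : S, u b * v a - u a * v b ≠ 0 := by
  obtain ⟨a, ha⟩ := Function.ne_iff.mp hv
  obtain ⟨b, hb⟩ := Function.ne_iff.mp (huv (u a / v a))
  refine ⟨a, b, fun h => hb ?_⟩
  rw [Pi.smul_apply, smul_eq_mul, div_mul_eq_mul_div, eq_div_iff ha]
  linear_combination h

theorem map_mul_of_mul_eq_mul [Semigroup S] {φ ψ : S → K} (hφ : φ ≠ 0)
    (h : ∀ z x, φ (z * x) = φ z * ψ x) (x y : S) : ψ (x * y) = ψ x * ψ y := by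
  obtain ⟨z, hz⟩ := Function.ne_iff.mp hφ
  apply mul_left_cancel₀ hz
  have hzxy := h (z * x) y
  rw [mul_assoc, h z x] at hzxy
  linear_combination hzxy - h z (x * y)

section FunctionalEquation

variable {σ : S → S} {μ f g : S → K}

section Mul

variable [Mul S] (hσ : ∀ x y, σ (x * y) = σ x * σ y) (hμ : ∀ x y, μ (x * y) = μ x * μ y)
  (hfg : ∀ x y, f (x * y) + μ y * f (σ y * x) = 2 * f x * g y)
include hσ hμ hfg

theorem twist_mul_add (z x : S) :
    twist σ μ f (z * x) + μ x * f (σ x * z) = 2 * g z * twist σ μ f x := by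
  have h := hfg (σ x) z
  rw [← hσ z x] at h
  unfold twist
  linear_combination μ x * h + f (σ (z * x)) * hμ z x

theorem sub_twist_mul (z x : S) :
    f (z * x) - twist σ μ f (z * x) = 2 * f z * g x - 2 * g z * twist σ μ f x := by
  linear_combination hfg z x - twist_mul_add hσ hμ hfg z x

end Mul

variable [Semigroup S] [NeZero (2 : K)] (hσ : ∀ x y, σ (x * y) = σ x * σ y)
  (hμ : ∀ x y, μ (x * y) = μ x * μ y)
  (hfg : ∀ x y, f (x * y) + μ y * f (σ y * x) = 2 * f x * g y)
include hσ hμ hfg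

theorem mul_sub_twist_mul_eq (z x y : S) :
    f (z * x) * g y - g (z * x) * twist σ μ f y
      = f z * g (x * y) - g z * twist σ μ f (x * y) := by
  have h := sub_twist_mul hσ hμ hfg (z * x) y
  rw [mul_assoc] at h
  apply mul_left_cancel₀ (two_ne_zero (α := K))
  linear_combination sub_twist_mul hσ hμ hfg z (x * y) - h

theorem map_mul_of_twist_eq_smul {l : K} (hl : twist σ μ f = l • g)
    (hfl : f ≠ l • g) (x y : S) : g (x * y) = g x * (2 * g y) := by
  have hφ : ∀ z x, (f - l • g) (z * x) = (f - l • g) z * (2 * g x) := by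
    intro z x
    have h := sub_twist_mul hσ hμ hfg z x
    simp only [hl, Pi.smul_apply, smul_eq_mul] at h
    simp only [Pi.sub_apply, Pi.smul_apply, smul_eq_mul]
    linear_combination h
  have h := map_mul_of_mul_eq_mul (sub_ne_zero.mpr hfl) hφ x y
  apply mul_left_cancel₀ (two_ne_zero (α := K))
  linear_combination h

theorem exists_map_mul_eq_of_twist_mul_sub_mul_ne_zero {a b : S}
    (hab : twist σ μ f b * g a - twist σ μ f a * g b ≠ 0) :
    ∃ h₁ h₂ : S → K, ∀ x y, g (x * y) = f x * h₁ y + g x * h₂ y := by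
  refine ⟨fun y => (g (y * a) * g b - g (y * b) * g a) /
      (twist σ μ f b * g a - twist σ μ f a * g b),
    fun y => (twist σ μ f (y * b) * g a - twist σ μ f (y * a) * g b) /
      (twist σ μ f b * g a - twist σ μ f a * g b), fun x y => ?_⟩
  rw [mul_div_assoc', mul_div_assoc', ← add_div, eq_div_iff hab]
  linear_combination g b * mul_sub_twist_mul_eq hσ hμ hfg x y a
    - g a * mul_sub_twist_mul_eq hσ hμ hfg x y b

end FunctionalEquation

end

theorem stmt_5_general {S : Type*} [Semigroup S] (σ : S → S)
    (hσ : ∀ x y : S, σ (x * y) = σ x * σ y)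
    (μ : S → ℂ) (hμ : ∀ x y : S, μ (x * y) = μ x * μ y)
    (f g : S → ℂ)
    (hfg : ∀ x y : S, f (x * y) + μ y * f (σ y * x) = 2 * f x * g y)
    (hindep : LinearIndependent ℂ ![fun x : S => (f x + μ x * f (σ x)) / 2, g]) :
    ∃ h₁ h₂ : S → ℂ, ∀ x y : S, g (x * y) = f x * h₁ y + g x * h₂ y := by
  have hg : g ≠ 0 := hindep.ne_zero 1
  by_cases hdep : ∃ l : ℂ, twist σ μ f = l • g
  · obtain ⟨l, hl⟩ := hdep
    have hfl : f ≠ l • g := by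
      rintro rfl
      refine (LinearIndependent.pair_iff' hg).mp (LinearIndependent.pair_symm_iff.mp hindep) l ?_
      funext x
      have hx := congrFun hl x
      simp only [twist, Pi.smul_apply, smul_eq_mul] at hx ⊢
      rw [hx]
      ring
    exact ⟨0, fun y => 2 * g y, fun x y => by
      simp [map_mul_of_twist_eq_smul hσ hμ hfg hl hfl x y]⟩
  · push Not at hdep
    obtain ⟨a, b, hab⟩ := exists_mul_sub_mul_ne_zero hg hdep
    exact exists_map_mul_eq_of_twist_mul_sub_mul_ne_zero hσ hμ hfg hab

/-- If f^e and g are linearly independent and g ≠ 0, then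
g(xy) = f(x)h₁(y) + g(x)h₂(y) for some functions h₁, h₂. -/
theorem stmt_5 {S : Type*} [Semigroup S] (σ : S → S) (hσbij : Function.Bijective σ)
    (hσ : ∀ x y : S, σ (x * y) = σ x * σ y)
    (μ : S → ℂ) (hμ : ∀ x y : S, μ (x * y) = μ x * μ y)
    (hμσ : ∀ x : S, μ (x * σ x) = 1)
    (f g : S → ℂ)
    (hfg : ∀ x y : S, f (x * y) + μ y * f (σ y * x) = 2 * f x * g y)
    (hindep : LinearIndependent ℂ ![fun x : S => (f x + μ x * f (σ x)) / 2, g])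
    (hg : g ≠ 0) :
    ∃ h₁ h₂ : S → ℂ, ∀ x y : S, g (x * y) = f x * h₁ y + g x * h₂ y :=
  stmt_5_general σ hσ μ hμ f g hfg hindep
end

section
/- Let f, g : S → ℂ satisfy f(xy) + μ(y)f(σ(y)x) = 2f(x)g(y) for all x, y ∈ S. If g is a non-zero multiplicative function, then there exists a function h : S → ℂ such that f(xy) = f(x)g(y) + g(x)h(y) for all x, y ∈ S. -/
/-!
Write `Δ(x, z) = f(xz) - f(x)g(z)`. Combining the equation at four suitable pairs of arguments
gives `f(xyz) = f(xy)g(z) + f(xz)g(y) - f(x)g(y)g(z)`, and from this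
`g(y) Δ(x, z) = μ(y) g(x) Δ(σ(y), z)`. Choosing `y₀` with `g(y₀) ≠ 0` shows that `Δ(x, z)` is
`g(x)` times a function of `z` alone, which is the required `h`.
-/

section

variable {S K : Type*} [Semigroup S] [Field K] {σ : S → S} {μ f g : S → K}

theorem mul_mul_eq_of_wilson [NeZero (2 : K)] (hσ : ∀ x y : S, σ (x * y) = σ x * σ y)
    (hμ : ∀ x y : S, μ (x * y) = μ x * μ y)
    (hfg : ∀ x y : S, f (x * y) + μ y * f (σ y * x) = 2 * f x * g y)
    (hgmul : ∀ x y : S, g (x * y) = g x * g y) (x y z : S) :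
    f (x * y * z) = f (x * y) * g z + f (x * z) * g y - f x * g y * g z := by
  have e1 := hfg (x * y) z
  have e2 := hfg (σ z * x) y
  have e3 := hfg x (y * z)
  have e4 := hfg x z
  rw [← mul_assoc] at e1
  rw [← mul_assoc, ← hσ] at e2
  rw [← mul_assoc, hμ, hgmul] at e3
  refine mul_left_cancel₀ (two_ne_zero (α := K)) ?_
  linear_combination e1 - μ z * e2 + e3 - 2 * g y * e4

theorem mul_sub_eq_of_wilson [NeZero (2 : K)] (hσ : ∀ x y : S, σ (x * y) = σ x * σ y)
    (hμ : ∀ x y : S, μ (x * y) = μ x * μ y)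
    (hfg : ∀ x y : S, f (x * y) + μ y * f (σ y * x) = 2 * f x * g y)
    (hgmul : ∀ x y : S, g (x * y) = g x * g y) (x y z : S) :
    g y * (f (x * z) - f x * g z) = μ y * g x * (f (σ y * z) - f (σ y) * g z) := by
  have s1 := hfg (x * z) y
  rw [← mul_assoc] at s1
  linear_combination -s1 + mul_mul_eq_of_wilson hσ hμ hfg hgmul x z y
    + μ y * mul_mul_eq_of_wilson hσ hμ hfg hgmul (σ y) x z + g z * hfg x y

end

theorem stmt_6_general {S : Type*} [Semigroup S] (σ : S → S)
    (hσ : ∀ x y : S, σ (x * y) = σ x * σ y)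
    (μ : S → ℂ) (hμ : ∀ x y : S, μ (x * y) = μ x * μ y)
    (f g : S → ℂ)
    (hfg : ∀ x y : S, f (x * y) + μ y * f (σ y * x) = 2 * f x * g y)
    (hgmul : ∀ x y : S, g (x * y) = g x * g y)
    (hg : g ≠ 0) :
    ∃ h : S → ℂ, ∀ x y : S, f (x * y) = f x * g y + g x * h y := by
  obtain ⟨y₀, hy₀⟩ : ∃ y, g y ≠ 0 := Function.ne_iff.mp hg
  refine ⟨fun z => μ y₀ / g y₀ * (f (σ y₀ * z) - f (σ y₀) * g z), fun x y => ?_⟩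
  have key := mul_sub_eq_of_wilson hσ hμ hfg hgmul x y₀ y
  field_simp
  linear_combination key

/-- If g is a non-zero multiplicative function, then
f(xy) = f(x)g(y) + g(x)h(y) for some function h. -/
theorem stmt_6 {S : Type*} [Semigroup S] (σ : S → S) (hσbij : Function.Bijective σ)
    (hσ : ∀ x y : S, σ (x * y) = σ x * σ y)
    (μ : S → ℂ) (hμ : ∀ x y : S, μ (x * y) = μ x * μ y)
    (hμσ : ∀ x : S, μ (x * σ x) = 1)
    (f g : S → ℂ)
    (hfg : ∀ x y : S, f (x * y) + μ y * f (σ y * x) = 2 * f x * g y)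
    (hgmul : ∀ x y : S, g (x * y) = g x * g y)
    (hg : g ≠ 0) :
    ∃ h : S → ℂ, ∀ x y : S, f (x * y) = f x * g y + g x * h y :=
  stmt_6_general σ hσ μ hμ f g hfg hgmul hg
end

section
/- Let f, g : S → ℂ satisfy f(xy) + μ(y)f(σ(y)x) = 2f(x)g(y) for all x, y ∈ S, and suppose there is a constant c ∈ ℂ with f^e = c·g. Then the pair (f°, g) satisfies the sine addition law: f°(xy) = f°(x)g(y) + f°(y)g(x) for all x, y ∈ S. -/
theorem sub_twist_mul_eq_of_dAlembert {S : Type*} [Semigroup S] (σ : S → S)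
    (hσ : ∀ x y : S, σ (x * y) = σ x * σ y)
    (μ : S → ℂ) (hμ : ∀ x y : S, μ (x * y) = μ x * μ y)
    (f g : S → ℂ)
    (hfg : ∀ x y : S, f (x * y) + μ y * f (σ y * x) = 2 * f x * g y) (x y : S) :
    f (x * y) - μ (x * y) * f (σ (x * y)) = 2 * (f x * g y - μ y * f (σ y) * g x) := by
  rw [hσ, hμ]
  linear_combination hfg x y - μ y * hfg (σ y) x

theorem stmt_12_general {S : Type*} [Semigroup S] (σ : S → S)
    (hσ : ∀ x y : S, σ (x * y) = σ x * σ y)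
    (μ : S → ℂ) (hμ : ∀ x y : S, μ (x * y) = μ x * μ y)
    (f g : S → ℂ)
    (hfg : ∀ x y : S, f (x * y) + μ y * f (σ y * x) = 2 * f x * g y)
    (c : ℂ) (hc : ∀ x : S, (f x + μ x * f (σ x)) / 2 = c * g x) :
    ∀ x y : S,
      (f (x * y) - μ (x * y) * f (σ (x * y))) / 2 =
        ((f x - μ x * f (σ x)) / 2) * g y +
          ((f y - μ y * f (σ y)) / 2) * g x := by
  intro x y
  -- splitting f = f^e + f° and f* = f^e - f°, the f^e terms cancel as c g(x) g(y) - c g(y) g(x)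
  linear_combination (1 / 2) * sub_twist_mul_eq_of_dAlembert σ hσ μ hμ f g hfg x y
    + g y * hc x - g x * hc y

/-- If f^e = c·g for a constant c, then (f°, g) satisfies the
sine addition law: f°(xy) = f°(x)g(y) + f°(y)g(x). -/
theorem stmt_12 {S : Type*} [Semigroup S] (σ : S → S) (hσbij : Function.Bijective σ)
    (hσ : ∀ x y : S, σ (x * y) = σ x * σ y)
    (μ : S → ℂ) (hμ : ∀ x y : S, μ (x * y) = μ x * μ y)
    (hμσ : ∀ x : S, μ (x * σ x) = 1)
    (f g : S → ℂ)
    (hfg : ∀ x y : S, f (x * y) + μ y * f (σ y * x) = 2 * f x * g y)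
    (c : ℂ) (hc : ∀ x : S, (f x + μ x * f (σ x)) / 2 = c * g x) :
    ∀ x y : S,
      (f (x * y) - μ (x * y) * f (σ (x * y))) / 2 =
        ((f x - μ x * f (σ x)) / 2) * g y +
          ((f y - μ y * f (σ y)) / 2) * g x :=
  stmt_12_general σ hσ μ hμ f g hfg c hc
end

section
/- Let f, g : S → ℂ satisfy f(xy) + μ(y)f(σ(y)x) = 2f(x)g(y) for all x, y ∈ S, with f ≠ 0 and g ≠ 0. Then f^e and g are linearly dependent, i.e. there exists c ∈ ℂ with f^e = c·g. -/
/-!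
The Wilson equation yields the expansion
`f(xyz) = f(xy)g(z) + f(x)g(yz) + f(xz)g(y) - 2f(x)g(y)g(z)`, and expanding `f(xyzw)` in two
ways gives a four-variable identity. If `g(ab) ≠ g(ba)`, that identity forces
`f(xa) = f(x)g(a)` for all `x`, then `f(xb) = f(x)g(b)`, and these give
`g(ba) = g(b)g(a) = g(ab)`; so `g` is central. Writing `F = f + f*` and
`Φ(x,y) = 2g(x)g(y) - g(xy)`, the formula for `f*` on products then gives
`Φ(x,y)(F(x)g(y) - F(y)g(x)) = 0` and the symmetry
`Φ(x,y)(F(z)g(w) - F(w)g(z)) = Φ(z,w)(F(x)g(y) - F(y)g(x))`. Hence `F` is proportional to `g`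
as soon as `Φ ≠ 0`; and `Φ = 0`, i.e. `2g` multiplicative, would force `f = 0`.
-/

theorem eq_zero_of_mul_eq_mul_swap {ι R : Type*} [CommRing R] [NoZeroDivisors R]
    {a b : ι → R} (hab : ∀ i j, a i * b j = a j * b i) (hdiag : ∀ i, a i * b i = 0)
    {i₀ : ι} (ha : a i₀ ≠ 0) (j : ι) : b j = 0 := by
  have : a i₀ * (b j * b j) = 0 := by
    rw [← mul_assoc, hab, mul_right_comm, hdiag, zero_mul]
  exact mul_self_eq_zero.mp ((mul_eq_zero.mp this).resolve_left ha)

section Semigroup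

variable {S : Type*} [Semigroup S]

def TripleExpansion (f g : S → ℂ) : Prop :=
  ∀ x y z,
    f (x * y * z) = f (x * y) * g z + f x * g (y * z) + f (x * z) * g y - 2 * f x * g y * g z

namespace TripleExpansion

variable {f g : S → ℂ}

theorem quadruple (H : TripleExpansion f g) (x y z w : S) :
    f (x * y) * (g (z * w) - g z * g w) - f (x * w) * (g (y * z) - g y * g z) =
      f x * (g y * g (z * w) - g (y * z) * g w) := by
  have h₁ := H x y (z * w)
  have h₂ := H x z w
  have h₃ := H x (y * z) w
  have h₄ := H x y z
  rw [mul_assoc x z w] at h₂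
  rw [mul_assoc x y z] at h₄
  rw [mul_assoc y z w] at h₃
  rw [← mul_assoc, mul_assoc x y z] at h₁
  linear_combination -h₁ - g y * h₂ + h₃ + g w * h₄

theorem map_mul_right_of_apply_mul (H : TripleExpansion f g) {a x₀ : S}
    (ha : ∀ x, f (x * a) = f x * g a) (hx₀ : f x₀ ≠ 0) (z : S) : g (z * a) = g z * g a := by
  have key : f x₀ * (g (z * a) - g z * g a) = 0 := by
    linear_combination -(H x₀ z a) + ha (x₀ * z) - g z * ha x₀
  exact sub_eq_zero.mp ((mul_eq_zero.mp key).resolve_left hx₀)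

theorem apply_mul_of_apply_mul (H : TripleExpansion f g) {a z : S}
    (ha : ∀ x, f (x * a) = f x * g a) (hz : g (a * z) ≠ g a * g z) (x w : S) :
    f (x * w) = f x * g w := by
  have key : (f (x * w) - f x * g w) * (g (a * z) - g a * g z) = 0 := by
    linear_combination -(H.quadruple x a z w) + (g (z * w) - g z * g w) * ha x
  exact sub_eq_zero.mp ((mul_eq_zero.mp key).resolve_right (sub_ne_zero.mpr hz))

theorem map_mul_comm (H : TripleExpansion f g) (hf : f ≠ 0) (a b : S) :
    g (a * b) = g (b * a) := by
  by_contra hab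
  obtain ⟨x₀, hx₀⟩ : ∃ x, f x ≠ 0 := Function.ne_iff.mp hf
  have ha : ∀ x, f (x * a) = f x * g a := fun x ↦ by
    have key : (f (x * a) - f x * g a) * (g (b * a) - g (a * b)) = 0 := by
      linear_combination H.quadruple x a b a
    exact sub_eq_zero.mp <|
      (mul_eq_zero.mp key).resolve_right (sub_ne_zero.mpr (Ne.symm hab))
  have hba : g (b * a) = g b * g a := H.map_mul_right_of_apply_mul ha hx₀ b
  have hb : ∀ x, f (x * b) = f x * g b :=
    fun x ↦ H.apply_mul_of_apply_mul ha (by rwa [hba, mul_comm] at hab) x b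
  exact hab (by rw [hba, H.map_mul_right_of_apply_mul hb hx₀ a, mul_comm])

theorem apply_mul_mul_map_swap (H : TripleExpansion f g)
    (hg : ∀ p q, g (p * q) = 2 * g p * g q) {z₀ : S} (hz₀ : g z₀ ≠ 0) (x y w : S) :
    f (x * y) * g w = f (x * w) * g y := by
  have key : g z₀ * (f (x * y) * g w - f (x * w) * g y) = 0 := by
    linear_combination H.quadruple x y z₀ w - f (x * y) * hg z₀ w + f (x * w) * hg y z₀
      + f x * g y * hg z₀ w - f x * g w * hg y z₀
  exact sub_eq_zero.mp ((mul_eq_zero.mp key).resolve_left hz₀)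

end TripleExpansion

def ConjProductFormula (f h g : S → ℂ) : Prop :=
  ∀ u v, h (u * v) = f (u * v) + 2 * h v * g u - 2 * f u * g v

namespace ConjProductFormula

variable {f h g : S → ℂ}

theorem mul_add_mul_eq (hh : ConjProductFormula f h g) (x y z : S) :
    f (x * y) * g z + h (y * z) * g x = f x * g (y * z) + h z * g (x * y) := by
  have h₁ := hh (x * y) z
  rw [mul_assoc] at h₁
  linear_combination (h₁ - hh x (y * z)) / 2

theorem defect_mul_cross_self (hh : ConjProductFormula f h g)
    (hg : ∀ u v, g (u * v) = g (v * u)) (x y : S) :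
    (2 * g x * g y - g (x * y)) * ((f x + h x) * g y - (f y + h y) * g x) = 0 := by
  linear_combination g x * g y * hh x y - g x * g y * hh y x + g y * hh.mul_add_mul_eq x y x
    - g x * hh.mul_add_mul_eq y x y - f x * g y * hg x y + h y * g x * hg x y

theorem defect_mul_cross_comm (hh : ConjProductFormula f h g)
    (hg : ∀ u v, g (u * v) = g (v * u)) (x y z w : S) :
    (2 * g x * g y - g (x * y)) * ((f z + h z) * g w - (f w + h w) * g z) =
      (2 * g z * g w - g (z * w)) * ((f x + h x) * g y - (f y + h y) * g x) := by
  have hF := hh.mul_add_mul_eq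
  linear_combination
    - g y * g w * hh x z + g x * g z * hh y w + g y * g w * hh z x - g x * g z * hh w y
      - g y * hF x z w + g w * hF y x z - g z * hF y x w - g w * hF y z x
      + g x * hF y z w + g z * hF y w x + g y * hF z x w + g w * hF z y x
      - g x * hF z y w - g y * hF z w x + g x * hF z w y - g z * hF w y x
      - f z * g w * hg x y + f w * g z * hg x y - h z * g w * hg x y + h w * g z * hg x y
      + f y * g w * hg x z - h w * g y * hg x z - f y * g z * hg x w + f z * g y * hg x w
      - h x * g w * hg y z + h w * g x * hg y z - f z * g x * hg y w + h x * g z * hg y w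

end ConjProductFormula

def IsWilsonSolution (σ : S → S) (μ : S → ℂ) (f g : S → ℂ) : Prop :=
  ∀ x y, f (x * y) + μ y * f (σ y * x) = 2 * f x * g y

namespace IsWilsonSolution

variable {σ : S → S} {μ : S → ℂ} {f g : S → ℂ}

theorem tripleExpansion (hfg : IsWilsonSolution σ μ f g) (hσ : ∀ x y, σ (x * y) = σ x * σ y)
    (hμ : ∀ x y, μ (x * y) = μ x * μ y) : TripleExpansion f g := by
  intro x y z
  have h₁ := hfg (x * y) z
  rw [← mul_assoc (σ z) x y] at h₁
  have h₂ := hfg (σ z * x) y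
  rw [← mul_assoc, ← hσ] at h₂
  have h₃ := hfg x (y * z)
  rw [← mul_assoc x y z, hμ y z] at h₃
  linear_combination (h₁ - μ z * h₂ + h₃ - 2 * g y * hfg x z) / 2

theorem conjProductFormula (hfg : IsWilsonSolution σ μ f g)
    (hσ : ∀ x y, σ (x * y) = σ x * σ y) (hμ : ∀ x y, μ (x * y) = μ x * μ y) :
    ConjProductFormula f (fun x ↦ μ x * f (σ x)) g := by
  intro u v
  have h := hfg (σ v) u
  rw [← hσ] at h
  linear_combination μ v * h - hfg u v + f (σ (u * v)) * hμ u v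

theorem apply_eq_zero (hfg : IsWilsonSolution σ μ f g) {x z₀ : S} (hz₀ : g z₀ ≠ 0)
    (h₁ : f (x * z₀) = 0) (h₂ : f (σ z₀ * x) = 0) : f x = 0 := by
  have key : 2 * g z₀ * f x = 0 := by linear_combination -(hfg x z₀) + h₁ + μ z₀ * h₂
  exact (mul_eq_zero.mp key).resolve_left (mul_ne_zero two_ne_zero hz₀)

/-- If `2g` were multiplicative, `f` would vanish on `σ(S) x z₀`, hence (`σ` being onto) on all
triple products, then on all products, then everywhere. -/
theorem exists_two_mul_ne_map_mul (hfg : IsWilsonSolution σ μ f g)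
    (hσ : ∀ x y, σ (x * y) = σ x * σ y) (hσs : Function.Surjective σ)
    (hμ : ∀ x y, μ (x * y) = μ x * μ y) (hμ₀ : ∀ x, μ x ≠ 0) (hf : f ≠ 0) (hg : g ≠ 0) :
    ∃ p q, 2 * g p * g q - g (p * q) ≠ 0 := by
  by_contra! hmul
  replace hmul : ∀ p q, g (p * q) = 2 * g p * g q := fun p q ↦ by
    linear_combination -hmul p q
  obtain ⟨z₀, hz₀⟩ : ∃ z, g z ≠ 0 := Function.ne_iff.mp hg
  have hswap := (hfg.tripleExpansion hσ hμ).apply_mul_mul_map_swap hmul hz₀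
  have hvanish : ∀ x y, f (σ y * (x * z₀)) = 0 := fun x y ↦ by
    have hsq := hswap x (z₀ * z₀) z₀
    rw [← mul_assoc] at hsq
    have key : μ y * g z₀ * g z₀ * f (σ y * (x * z₀)) = 0 := by
      linear_combination g z₀ * g z₀ * hfg (x * z₀) y - g z₀ * hswap (x * z₀) y z₀ - g y * hsq
        - f (x * z₀) * g y * hmul z₀ z₀
    exact (mul_eq_zero.mp key).resolve_left <|
      mul_ne_zero (mul_ne_zero (hμ₀ y) hz₀) hz₀
  have htriple : ∀ u x y, f (u * x * y) = 0 := fun u x y ↦ by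
    obtain ⟨s, rfl⟩ := hσs u
    have h := hswap (σ s * x) y z₀
    rw [mul_assoc (σ s) x z₀, hvanish, zero_mul] at h
    exact (mul_eq_zero.mp h).resolve_right hz₀
  have hpair : ∀ u v, f (u * v) = 0 := fun u v ↦
    hfg.apply_eq_zero hz₀ (htriple u v z₀) (by rw [← mul_assoc, htriple])
  exact hf (funext fun x ↦ hfg.apply_eq_zero hz₀ (hpair x z₀) (hpair (σ z₀) x))

end IsWilsonSolution

end Semigroup

/-- If (f, g) solves the μ-σ-Wilson equation with f ≠ 0 and g ≠ 0, then
f^e and g are linearly dependent: f^e = c·g for some c ∈ ℂ. -/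
theorem stmt_13 {S : Type*} [Semigroup S] (σ : S → S) (hσbij : Function.Bijective σ)
    (hσ : ∀ x y : S, σ (x * y) = σ x * σ y)
    (μ : S → ℂ) (hμ : ∀ x y : S, μ (x * y) = μ x * μ y)
    (hμσ : ∀ x : S, μ (x * σ x) = 1)
    (f g : S → ℂ)
    (hfg : ∀ x y : S, f (x * y) + μ y * f (σ y * x) = 2 * f x * g y)
    (hf : f ≠ 0) (hg : g ≠ 0) :
    ∃ c : ℂ, ∀ x : S, (f x + μ x * f (σ x)) / 2 = c * g x := by
  have hfg : IsWilsonSolution σ μ f g := hfg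
  have hμ₀ : ∀ x, μ x ≠ 0 := fun x ↦
    left_ne_zero_of_mul_eq_one ((hμ x (σ x)).symm.trans (hμσ x))
  have hcomm := (hfg.tripleExpansion hσ hμ).map_mul_comm hf
  have hconj := hfg.conjProductFormula hσ hμ
  obtain ⟨p, q, hpq⟩ := hfg.exists_two_mul_ne_map_mul hσ hσbij.2 hμ hμ₀ hf hg
  obtain ⟨z₀, hz₀⟩ : ∃ z, g z ≠ 0 := Function.ne_iff.mp hg
  set F : S → ℂ := fun x ↦ f x + μ x * f (σ x)
  have hcross : ∀ x, F x * g z₀ - F z₀ * g x = 0 := fun x ↦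
    eq_zero_of_mul_eq_mul_swap (a := fun i : S × S ↦ 2 * g i.1 * g i.2 - g (i.1 * i.2))
      (b := fun i ↦ F i.1 * g i.2 - F i.2 * g i.1)
      (fun i j ↦ hconj.defect_mul_cross_comm hcomm i.1 i.2 j.1 j.2)
      (fun i ↦ hconj.defect_mul_cross_self hcomm i.1 i.2) (i₀ := (p, q)) hpq (x, z₀)
  refine ⟨F z₀ / (2 * g z₀), fun x ↦ ?_⟩
  field_simp
  linear_combination hcross x
end

section
/- Let f, g : S → ℂ satisfy f(xy) + μ(y)f(σ(y)x) = 2f(x)g(y) for all x, y ∈ S, with f ≠ 0 and g ≠ 0. Then f and g are abelian; in particular f and g are central. -/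
/-!
For fixed `x`, the function `w ↦ f (x * w) - f x * g w` satisfies the sine addition law with
partner `g`. A nonzero solution `φ` of the sine addition law forces
`g (y * z) = g y * g z + c * φ y * φ z`, which makes `g` abelian; if all these functions vanish,
`g` is multiplicative because `f ≠ 0`. Then `f (x * (y * z))` is symmetric in `y, z`.
Comparing the equation at `y * x` and `x * y` and using that `μ` never vanishes and `σ` is onto
makes `f ((a * b) * z)` symmetric in `a, b`; comparing it at `z * x` and `x * z` then shows
`f (z * x) = f (x * z)`.
-/

def IsSineAddition {S R : Type*} [Mul S] [Mul R] [Add R] (g φ : S → R) : Prop :=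
  ∀ y z : S, φ (y * z) = φ y * g z + φ z * g y

def IsMuSigmaWilson {S R : Type*} [Mul S] [Semiring R] (σ : S → S) (μ f g : S → R) : Prop :=
  ∀ x y : S, f (x * y) + μ y * f (σ y * x) = 2 * f x * g y

namespace IsSineAddition

variable {S : Type*} [Semigroup S]

theorem apply_mul_comm {R : Type*} [CommSemiring R] {g φ : S → R} (hφ : IsSineAddition g φ)
    (y z : S) : φ (y * z) = φ (z * y) := by
  rw [hφ, hφ, add_comm]

/-- Expanding `φ (y * z * w)` along both bracketings. -/
theorem apply_mul_sub_mul {R : Type*} [CommRing R] {g φ : S → R} (hφ : IsSineAddition g φ)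
    (y z w : S) : φ w * (g (y * z) - g y * g z) = φ y * (g (z * w) - g z * g w) := by
  have h := hφ (y * z) w
  rw [mul_assoc, hφ, hφ, hφ] at h
  linear_combination -h

theorem exists_apply_mul_eq {K : Type*} [Field K] {g φ : S → K} (hφ : IsSineAddition g φ)
    (hφ0 : φ ≠ 0) : ∃ c : K, ∀ y z : S, g (y * z) = g y * g z + c * φ y * φ z := by
  obtain ⟨w, hw⟩ : ∃ w, φ w ≠ 0 := Function.ne_iff.mp hφ0
  refine ⟨(g (w * w) - g w * g w) / φ w ^ 2, fun y z => ?_⟩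
  have hyz := hφ.apply_mul_sub_mul y z w
  have hzw := hφ.apply_mul_sub_mul z w w
  field_simp
  linear_combination φ w * hyz + φ y * hzw

theorem abelian_of_apply_mul_eq {R : Type*} [CommRing R] {g φ : S → R}
    (hφ : IsSineAddition g φ) {c : R} (hg : ∀ y z : S, g (y * z) = g y * g z + c * φ y * φ z) :
    (∀ x y : S, g (x * y) = g (y * x)) ∧ ∀ x y z : S, g (x * (y * z)) = g (x * (z * y)) := by
  have hcomm (y z : S) : g (y * z) = g (z * y) := by rw [hg, hg]; ring
  exact ⟨hcomm, fun x y z => by rw [hg x, hg x, hcomm y, hφ.apply_mul_comm y]⟩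

end IsSineAddition

namespace IsMuSigmaWilson

variable {S : Type*} [Semigroup S] {K : Type*} [Field K] [NeZero (2 : K)]
  {σ : S → S} {μ f g : S → K}

theorem isSineAddition (hσ : ∀ x y : S, σ (x * y) = σ x * σ y)
    (hμ : ∀ x y : S, μ (x * y) = μ x * μ y) (hfg : IsMuSigmaWilson σ μ f g) (x : S) :
    IsSineAddition g fun w => f (x * w) - f x * g w := by
  intro y z
  have E1 := hfg x (y * z)
  rw [hσ, hμ, mul_assoc (σ y) (σ z) x] at E1
  have E2 := hfg (σ z * x) y
  rw [mul_assoc (σ z) x y] at E2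
  have E3 := hfg x z
  have E4 := hfg (x * y) z
  rw [mul_assoc x y z] at E4
  have h2 : (2 : K) * (f (x * (y * z)) - f x * g (y * z)) =
      2 * ((f (x * y) - f x * g y) * g z + (f (x * z) - f x * g z) * g y) := by
    linear_combination E1 - μ z * E2 + E4 - 2 * g y * E3
  exact mul_left_cancel₀ two_ne_zero h2

theorem exists_isSineAddition_apply_mul_eq (hσ : ∀ x y : S, σ (x * y) = σ x * σ y)
    (hμ : ∀ x y : S, μ (x * y) = μ x * μ y) (hfg : IsMuSigmaWilson σ μ f g) (hf : f ≠ 0) :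
    ∃ (φ : S → K) (c : K), IsSineAddition g φ ∧
      ∀ y z : S, g (y * z) = g y * g z + c * φ y * φ z := by
  by_cases hF : ∃ x, (fun w => f (x * w) - f x * g w) ≠ 0
  · obtain ⟨x, hx⟩ := hF
    have hφ := hfg.isSineAddition hσ hμ x
    obtain ⟨c, hc⟩ := hφ.exists_apply_mul_eq hx
    exact ⟨_, c, hφ, hc⟩
  · push Not at hF
    have hmul (x w : S) : f (x * w) = f x * g w := sub_eq_zero.mp (congrFun (hF x) w)
    obtain ⟨x, hx⟩ : ∃ x, f x ≠ 0 := Function.ne_iff.mp hf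
    refine ⟨0, 0, fun _ _ => by simp, fun y z => mul_left_cancel₀ hx ?_⟩
    have h := hmul (x * y) z
    rw [mul_assoc, hmul, hmul] at h
    linear_combination h

theorem apply_mul_mul_comm (hσ : ∀ x y : S, σ (x * y) = σ x * σ y)
    (hμ : ∀ x y : S, μ (x * y) = μ x * μ y) (hfg : IsMuSigmaWilson σ μ f g)
    (hg : ∀ x y : S, g (x * y) = g (y * x)) (x y z : S) :
    f (x * (y * z)) = f (x * (z * y)) := by
  have h := (hfg.isSineAddition hσ hμ x).apply_mul_comm y z
  rw [hg] at h
  exact sub_left_inj.mp h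

theorem apply_mul_mul_comm_left (hσ : ∀ x y : S, σ (x * y) = σ x * σ y)
    (hσsurj : Function.Surjective σ) (hμ : ∀ x y : S, μ (x * y) = μ x * μ y)
    (hμ0 : ∀ x : S, μ x ≠ 0) (hfg : IsMuSigmaWilson σ μ f g)
    (hg : ∀ x y : S, g (x * y) = g (y * x)) (a b z : S) :
    f (a * b * z) = f (b * a * z) := by
  obtain ⟨x, rfl⟩ := hσsurj a
  obtain ⟨y, rfl⟩ := hσsurj b
  have hxy := hfg z (x * y)
  have hyx := hfg z (y * x)
  rw [hσ, hμ] at hxy hyx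
  rw [hfg.apply_mul_mul_comm hσ hμ hg, hg] at hxy
  refine mul_left_cancel₀ (mul_ne_zero (hμ0 x) (hμ0 y)) ?_
  linear_combination hxy - hyx

theorem apply_mul_comm (hσ : ∀ x y : S, σ (x * y) = σ x * σ y)
    (hσsurj : Function.Surjective σ) (hμ : ∀ x y : S, μ (x * y) = μ x * μ y)
    (hμ0 : ∀ x : S, μ x ≠ 0) (hfg : IsMuSigmaWilson σ μ f g)
    (hg : ∀ x y : S, g (x * y) = g (y * x)) (hg0 : g ≠ 0) (x z : S) :
    f (x * z) = f (z * x) := by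
  obtain ⟨y, hy⟩ : ∃ y, g y ≠ 0 := Function.ne_iff.mp hg0
  have hxz := hfg (x * z) y
  have hzx := hfg (z * x) y
  rw [hfg.apply_mul_mul_comm_left hσ hσsurj hμ hμ0 hg,
    hfg.apply_mul_mul_comm hσ hμ hg] at hxz
  refine mul_right_cancel₀ (mul_ne_zero two_ne_zero hy) ?_
  linear_combination hzx - hxz

end IsMuSigmaWilson

/-- If (f, g) solves the μ-σ-Wilson equation with f ≠ 0 and g ≠ 0, then
f and g are abelian (in particular central). -/
theorem stmt_14 {S : Type*} [Semigroup S] (σ : S → S) (hσbij : Function.Bijective σ)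
    (hσ : ∀ x y : S, σ (x * y) = σ x * σ y)
    (μ : S → ℂ) (hμ : ∀ x y : S, μ (x * y) = μ x * μ y)
    (hμσ : ∀ x : S, μ (x * σ x) = 1)
    (f g : S → ℂ)
    (hfg : ∀ x y : S, f (x * y) + μ y * f (σ y * x) = 2 * f x * g y)
    (hf : f ≠ 0) (hg : g ≠ 0) :
    ((∀ x y : S, f (x * y) = f (y * x)) ∧
      (∀ x y z : S, f (x * (y * z)) = f (x * (z * y)))) ∧
    ((∀ x y : S, g (x * y) = g (y * x)) ∧
      (∀ x y z : S, g (x * (y * z)) = g (x * (z * y)))) := by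
  have hμ0 (x : S) : μ x ≠ 0 := left_ne_zero_of_mul_eq_one (hμ x (σ x) ▸ hμσ x)
  have hW : IsMuSigmaWilson σ μ f g := hfg
  obtain ⟨φ, c, hφ, hgφ⟩ := hW.exists_isSineAddition_apply_mul_eq hσ hμ hf
  obtain ⟨hgc, hga⟩ := hφ.abelian_of_apply_mul_eq hgφ
  exact ⟨⟨hW.apply_mul_comm hσ hσbij.2 hμ hμ0 hgc hg, hW.apply_mul_mul_comm hσ hμ hgc⟩,
    hgc, hga⟩
end

section
/- Let χ : S → ℂ be a non-zero multiplicative function and α, β ∈ ℂ constants such that χ* ≠ χ and, in case β ≠ 0, χ∘σ² = χ. Then the pair f := αχ + βχ*, g := (χ + χ*)/2 satisfies f(xy) + μ(y)f(σ(y)x) = 2f(x)g(y) for all x, y ∈ S. -/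
/-! The equation `f(xy) + μ(y) f(σ(y)x) = 2 f(x) g(y)` is linear in `f` once `g` is fixed, so it
suffices that both `χ` and `χ*` solve it with `g = (χ + χ*)/2`. For `χ` this is multiplicativity
alone; for `χ*` one also needs `μ(y) μ(σ y) = 1` and `χ ∘ σ² = χ`. -/

section

variable {S : Type*} [Semigroup S] {σ : S → S} {μ χ : S → ℂ}

theorem wilson_eq_of_mul (hχ : ∀ x y : S, χ (x * y) = χ x * χ y) (x y : S) :
    χ (x * y) + μ y * χ (σ y * x) = χ x * (χ y + μ y * χ (σ y)) := by
  simp only [hχ]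
  ring

theorem wilson_eq_star_of_mul (hσ : ∀ x y : S, σ (x * y) = σ x * σ y)
    (hμ : ∀ x y : S, μ (x * y) = μ x * μ y) (hμσ : ∀ x : S, μ (x * σ x) = 1)
    (hχ : ∀ x y : S, χ (x * y) = χ x * χ y) (hσσ : ∀ x : S, χ (σ (σ x)) = χ x) (x y : S) :
    μ (x * y) * χ (σ (x * y)) + μ y * (μ (σ y * x) * χ (σ (σ y * x))) =
      μ x * χ (σ x) * (χ y + μ y * χ (σ y)) := by
  have hμμσ : μ y * μ (σ y) = 1 := by rw [← hμ, hμσ]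
  simp only [hσ, hμ, hχ, hσσ]
  linear_combination μ x * χ y * χ (σ x) * hμμσ

end

theorem stmt_16_general {S : Type*} [Semigroup S] (σ : S → S)
    (hσ : ∀ x y : S, σ (x * y) = σ x * σ y)
    (μ : S → ℂ) (hμ : ∀ x y : S, μ (x * y) = μ x * μ y)
    (hμσ : ∀ x : S, μ (x * σ x) = 1)
    (χ : S → ℂ) (hχmul : ∀ x y : S, χ (x * y) = χ x * χ y)
    (α β : ℂ)
    (hβ : β ≠ 0 → ∀ x : S, χ (σ (σ x)) = χ x) :
    ∀ x y : S,
      (α * χ (x * y) + β * (μ (x * y) * χ (σ (x * y)))) +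
          μ y * (α * χ (σ y * x) + β * (μ (σ y * x) * χ (σ (σ y * x)))) =
        2 * (α * χ x + β * (μ x * χ (σ x))) *
          ((χ y + μ y * χ (σ y)) / 2) := by
  intro x y
  have hχ_sol := wilson_eq_of_mul (σ := σ) (μ := μ) hχmul x y
  rcases eq_or_ne β 0 with rfl | hβ0
  · linear_combination α * hχ_sol
  · linear_combination α * hχ_sol + β * wilson_eq_star_of_mul hσ hμ hμσ hχmul (hβ hβ0) x y

/-- If χ is a non-zero multiplicative function with χ* ≠ χ and, in case
β ≠ 0, χ∘σ² = χ, then f = αχ + βχ*, g = (χ + χ*)/2 solve the μ-σ-Wilson equation. -/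
theorem stmt_16 {S : Type*} [Semigroup S] (σ : S → S) (hσbij : Function.Bijective σ)
    (hσ : ∀ x y : S, σ (x * y) = σ x * σ y)
    (μ : S → ℂ) (hμ : ∀ x y : S, μ (x * y) = μ x * μ y)
    (hμσ : ∀ x : S, μ (x * σ x) = 1)
    (χ : S → ℂ) (hχmul : ∀ x y : S, χ (x * y) = χ x * χ y) (hχ : χ ≠ 0)
    (α β : ℂ)
    (hne : (fun x : S => μ x * χ (σ x)) ≠ χ)
    (hβ : β ≠ 0 → ∀ x : S, χ (σ (σ x)) = χ x) :
    ∀ x y : S,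
      (α * χ (x * y) + β * (μ (x * y) * χ (σ (x * y)))) +
          μ y * (α * χ (σ y * x) + β * (μ (σ y * x) * χ (σ (σ y * x)))) =
        2 * (α * χ x + β * (μ x * χ (σ x))) *
          ((χ y + μ y * χ (σ y)) / 2) :=
  stmt_16_general σ hσ μ hμ hμσ χ hχmul α β hβ
end
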